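/- Let λ, μ ∈ ℂ with μ ≠ 0 and let I_λ denote the modified Bessel function defined by its power series. Then for every H > 0 the function F(H) = H^{−1} I_λ(2μ H^{−1}) satisfies the differential equation ¼ H² F''(H) + ¾ H F'(H) − μ² H^{−2} F(H) = ¼(λ² − 1) F(H). In particular, for λ = ±iν with ν ∈ ℝ, the functions H^{−1} I_{±iν}(2μ H^{−1}) satisfy ¼ H² F'' + ¾ H F' − μ² H^{−2} F = −¼(ν² + 1) F, i.e. they are eigenfunctions of the Laplace–Beltrami operator on the Lobachevsky space in horospheric coordinates after Fourier transform along the horosphere. -/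

import Mathlib

/-!
Since `(2μH⁻¹ / 2)^(λ+2n) = μ^(λ+2n) H^(-λ-2n)` for `H > 0`, `F(H) = ∑ cₙ H^(-(λ+1)-2n)` with
`cₙ = μ^(λ+2n) / (n! Γ(λ+n+1))`, and `1/Γ(s) = s/Γ(s+1)` gives `μ² cₙ = (n+1)(λ+n+1) cₙ₊₁`.
By the ratio test `∑ cₙ wⁿ` is entire, so the series can be differentiated termwise (as a
holomorphic function on `re H > 0`). The operator `¼H²∂² + ¾H∂` multiplies `Hᵃ` by `¼a(a+2)`,
which for `a = -(λ+1)-2n` equals `¼(λ²-1) + n(λ+n)`; by the recurrence the surplus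
`n(λ+n) cₙ Hᵃ` of the `n`-th term cancels the `-μ²H⁻²` contribution of the `(n-1)`-st.
-/

/-- The modified Bessel function `I_λ(x) = ∑_{k} (x/2)^{λ+2k}/(k! Γ(λ+k+1))`,
defined by its power series (with complex powers taken via the principal branch,
which for positive real argument is `exp((λ+2k) ln(x/2))`; `1/Γ` vanishes at the
poles of `Γ`, matching the entire function `1/Γ`). -/
noncomputable def besselI (lam : ℂ) (x : ℂ) : ℂ :=
  ∑' k : ℕ, (x / 2) ^ (lam + 2 * (k : ℂ)) / ((k.factorial : ℂ) * Complex.Gamma (lam + k + 1))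

/-- `F(H) = H⁻¹ I_λ(2 μ H⁻¹)`. -/
noncomputable def besselF (lam μ : ℂ) : ℝ → ℂ :=
  fun H => (H : ℂ)⁻¹ * besselI lam (2 * μ / H)

open Complex Filter Topology Set

lemma tsum_sub_succ {G : Type*} [AddCommGroup G] [TopologicalSpace G] [IsTopologicalAddGroup G]
    [T2Space G] {f : ℕ → G} (hf : Summable f) : ∑' n, (f n - f (n + 1)) = f 0 := by
  rw [hf.tsum_sub ((summable_nat_add_iff 1).2 hf), hf.tsum_eq_zero_add, add_sub_cancel_right]

lemma Complex.div_ofReal_cpow (x c : ℂ) {r : ℝ} (hr : 0 < r) :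
    (x / r) ^ c = x ^ c / (r : ℂ) ^ c := by
  rcases eq_or_ne x 0 with rfl | hx
  · rcases eq_or_ne c 0 with rfl | hc <;> simp [zero_cpow, *]
  have hr' : ((r⁻¹ : ℝ) : ℂ) ≠ 0 := by simp [hr.ne']
  rw [div_eq_mul_inv, ← ofReal_inv, cpow_def_of_ne_zero (mul_ne_zero hx hr'),
    log_mul_ofReal _ (inv_pos.2 hr) _ hx, add_mul, exp_add, ← cpow_def_of_ne_zero hx,
    ofReal_log (inv_pos.2 hr).le, ← cpow_def_of_ne_zero hr', ofReal_inv,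
    inv_cpow_ofReal_nonneg hr.le, div_eq_mul_inv, mul_comm]

lemma Complex.cpow_sub_two_mul {z : ℂ} (hz : z ≠ 0) (e : ℂ) (n : ℕ) :
    z ^ (e - 2 * n) = z ^ e * ((z ^ 2)⁻¹) ^ n := by
  rw [cpow_sub _ _ hz, show (2 * n : ℂ) = ((2 * n : ℕ) : ℂ) by push_cast; ring, cpow_natCast,
    pow_mul, inv_pow, div_eq_mul_inv]

def HasInfiniteRadius (D : ℕ → ℂ) : Prop :=
  ∀ R : ℝ, 0 < R → Summable fun n => ‖D n‖ * R ^ n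

namespace HasInfiniteRadius

variable {D : ℕ → ℂ}

lemma linear_mul (hD : HasInfiniteRadius D) (a b : ℂ) :
    HasInfiniteRadius fun n => (a - b * n) * D n := by
  intro R hR
  have hbound (n : ℕ) :
      ‖(a - b * n) * D n‖ * R ^ n ≤ (‖a‖ + ‖b‖) * (‖D n‖ * (2 * R) ^ n) := by
    have hn : (n : ℝ) ≤ 2 ^ n := by exact_mod_cast n.lt_two_pow_self.le
    have h1 : (1 : ℝ) ≤ 2 ^ n := one_le_pow₀ (by norm_num)
    have hab : ‖a - b * n‖ ≤ ‖a‖ + ‖b‖ * n := (norm_sub_le _ _).trans (by simp)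
    calc ‖(a - b * n) * D n‖ * R ^ n ≤ (‖a‖ + ‖b‖ * n) * (‖D n‖ * R ^ n) := by
          rw [norm_mul, mul_assoc]; gcongr
      _ ≤ (‖a‖ + ‖b‖) * 2 ^ n * (‖D n‖ * R ^ n) := by
          gcongr; nlinarith [norm_nonneg a, norm_nonneg b]
      _ = (‖a‖ + ‖b‖) * (‖D n‖ * (2 * R) ^ n) := by rw [mul_pow]; ring
  exact .of_nonneg_of_le (fun n => by positivity) hbound ((hD (2 * R) (by positivity)).mul_left _)

lemma of_norm_succ_le {q : ℕ → ℝ} (hq : Tendsto q atTop (𝓝 0))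
    (hD : ∀ᶠ n in atTop, ‖D (n + 1)‖ ≤ q n * ‖D n‖) : HasInfiniteRadius D := by
  intro R hR
  refine summable_of_ratio_norm_eventually_le (r := 1 / 2) (by norm_num) ?_
  filter_upwards [hD, hq.eventually (gt_mem_nhds (show (0 : ℝ) < 1 / (2 * R) by positivity))]
    with n hn hqn
  simp only [norm_mul, norm_norm, norm_pow, Real.norm_of_nonneg hR.le, pow_succ]
  have hqR : q n * R ≤ 1 / 2 := by
    rw [lt_div_iff₀ (by positivity)] at hqn; linarith
  calc ‖D (n + 1)‖ * (R ^ n * R) ≤ q n * ‖D n‖ * (R ^ n * R) := by gcongr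
    _ = (q n * R) * (‖D n‖ * R ^ n) := by ring
    _ ≤ 1 / 2 * (‖D n‖ * R ^ n) := by gcongr

lemma of_recurrence {lam μ : ℂ}
    (hrec : ∀ n : ℕ, μ ^ 2 * D n = (n + 1) * (lam + n + 1) * D (n + 1)) :
    HasInfiniteRadius D := by
  refine of_norm_succ_le (tendsto_const_div_atTop_nhds_zero_nat (2 * ‖μ‖ ^ 2)) ?_
  filter_upwards [eventually_ge_atTop (⌈2 * ‖lam‖⌉₊ + 1)] with n hn
  have hn' : 2 * ‖lam‖ + 1 ≤ n := by
    have hceil := Nat.le_ceil (2 * ‖lam‖)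
    have hcast : ((⌈2 * ‖lam‖⌉₊ + 1 : ℕ) : ℝ) ≤ n := by exact_mod_cast hn
    push_cast at hcast
    linarith
  have hlam : ((n : ℝ) + 1) / 2 ≤ ‖lam + n + 1‖ := by
    have h := norm_sub_norm_le ((n + 1 : ℕ) : ℂ) (-lam)
    rw [norm_neg, Complex.norm_natCast, show ((n + 1 : ℕ) : ℂ) - -lam = lam + n + 1 by
      push_cast; ring] at h
    push_cast at h
    linarith
  have hnorm : ‖μ‖ ^ 2 * ‖D n‖ = ((n : ℝ) + 1) * ‖lam + n + 1‖ * ‖D (n + 1)‖ := by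
    have h := congrArg norm (hrec n)
    rwa [norm_mul, norm_mul, norm_mul, norm_pow, show ((n : ℂ) + 1) = ((n + 1 : ℕ) : ℂ) by
      push_cast; ring, Complex.norm_natCast, Nat.cast_succ] at h
  have hn0 : (0 : ℝ) < n := by linarith [norm_nonneg lam]
  rw [div_mul_eq_mul_div, le_div_iff₀ hn0]
  calc ‖D (n + 1)‖ * n ≤ ((n : ℝ) + 1) * (2 * ((n + 1) / 2)) * ‖D (n + 1)‖ := by
        rw [mul_comm]
        gcongr
        nlinarith
    _ ≤ ((n : ℝ) + 1) * (2 * ‖lam + n + 1‖) * ‖D (n + 1)‖ := by gcongr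
    _ = 2 * ‖μ‖ ^ 2 * ‖D n‖ := by rw [mul_assoc 2, hnorm]; ring

end HasInfiniteRadius

noncomputable def cpowSeries (D : ℕ → ℂ) (e z : ℂ) : ℂ :=
  ∑' n : ℕ, D n * z ^ (e - 2 * n)

section cpowSeries

variable {D : ℕ → ℂ}

lemma norm_cpowSeries_term {z : ℂ} (hz : z ≠ 0) (e : ℂ) (n : ℕ) :
    ‖D n * z ^ (e - 2 * n)‖ = ‖z ^ e‖ * (‖D n‖ * (‖z‖⁻¹ ^ 2) ^ n) := by
  rw [cpow_sub_two_mul hz, norm_mul, norm_mul, norm_pow, norm_inv, norm_pow]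
  ring

lemma summable_cpowSeries (hD : HasInfiniteRadius D) (e : ℂ) {z : ℂ} (hz : z ≠ 0) :
    Summable fun n : ℕ => D n * z ^ (e - 2 * n) :=
  .of_norm <| ((hD _ (by positivity)).mul_left ‖z ^ e‖).congr fun n =>
    (norm_cpowSeries_term hz e n).symm

lemma hasDerivAt_cpowSeries_term (e : ℂ) (n : ℕ) {z : ℂ} (hz : z ∈ slitPlane) :
    HasDerivAt (fun w => D n * w ^ (e - 2 * n)) ((e - 2 * n) * D n * z ^ (e - 1 - 2 * n)) z := by
  refine (((hasDerivAt_id z).cpow_const (c := e - 2 * n) hz).const_mul (D n)).congr_deriv ?_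
  rw [id_eq, sub_right_comm]
  ring

lemma hasDerivAt_cpowSeries (hD : HasInfiniteRadius D) (e : ℂ) {z₀ : ℂ} (hz₀ : 0 < z₀.re) :
    HasDerivAt (cpowSeries D e) (cpowSeries (fun n => (e - 2 * n) * D n) (e - 1) z₀) z₀ := by
  set r := z₀.re / 2
  have hr : 0 < r := half_pos hz₀
  have hr2 : 2 * r = z₀.re := mul_div_cancel₀ _ two_ne_zero
  have hre (z : ℂ) (hz : z ∈ Metric.closedBall z₀ r) : r ≤ z.re := by
    have := (abs_re_le_norm (z - z₀)).trans (mem_closedBall_iff_norm.1 hz)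
    rw [sub_re, abs_le] at this
    linarith
  have hslit (z : ℂ) (hz : z ∈ Metric.closedBall z₀ r) : z ∈ slitPlane :=
    mem_slitPlane_iff.2 (Or.inl (hr.trans_le (hre z hz)))
  obtain ⟨M, hM⟩ := (isCompact_closedBall z₀ r).exists_bound_of_continuousOn
    (f := fun z : ℂ => z ^ e) fun z hz => (continuousAt_cpow_const (hslit z hz)).continuousWithinAt
  have hM0 : 0 ≤ M := (norm_nonneg _).trans (hM z₀ (Metric.mem_closedBall_self hr.le))
  have hbound (n : ℕ) (z : ℂ) (hz : z ∈ Metric.ball z₀ r) :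
      ‖D n * z ^ (e - 2 * n)‖ ≤ M * (‖D n‖ * (r⁻¹ ^ 2) ^ n) := by
    have hz' := Metric.ball_subset_closedBall hz
    have hrz : r ≤ ‖z‖ := (hre z hz').trans (re_le_norm z)
    rw [norm_cpowSeries_term (slitPlane_ne_zero (hslit z hz')) e n]
    gcongr
    exact hM z hz'
  have hdiff (n : ℕ) : DifferentiableOn ℂ (fun z => D n * z ^ (e - 2 * n)) (Metric.ball z₀ r) :=
    fun z hz => (hasDerivAt_cpowSeries_term e n
      (hslit z (Metric.ball_subset_closedBall hz))).differentiableAt.differentiableWithinAt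
  have hu := (hD (r⁻¹ ^ 2) (by positivity)).mul_left M
  have hz₀U : z₀ ∈ Metric.ball z₀ r := Metric.mem_ball_self hr
  have hderiv := hasSum_deriv_of_summable_norm hu hdiff Metric.isOpen_ball hbound hz₀U
  simp only [(hasDerivAt_cpowSeries_term e _ (hslit z₀ (Metric.mem_closedBall_self hr.le))).deriv]
    at hderiv
  rw [cpowSeries, hderiv.tsum_eq]
  exact ((differentiableOn_tsum_of_summable_norm hu hdiff Metric.isOpen_ball hbound)
    |>.differentiableAt (Metric.isOpen_ball.mem_nhds hz₀U)).hasDerivAt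

lemma hasDerivAt_ofReal_cpowSeries (hD : HasInfiniteRadius D) (e : ℂ) {x : ℝ} (hx : 0 < x) :
    HasDerivAt (fun y : ℝ => cpowSeries D e y)
      (cpowSeries (fun n => (e - 2 * n) * D n) (e - 1) x) x :=
  (hasDerivAt_cpowSeries hD e (by simpa using hx)).comp_ofReal

lemma eqOn_deriv_ofReal_cpowSeries (hD : HasInfiniteRadius D) (e : ℂ) :
    EqOn (deriv fun y : ℝ => cpowSeries D e y)
      (fun y : ℝ => cpowSeries (fun n => (e - 2 * n) * D n) (e - 1) y) (Ioi 0) :=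
  fun _ hx => (hasDerivAt_ofReal_cpowSeries hD e hx).deriv

end cpowSeries

noncomputable def besselCoeff (lam μ : ℂ) (n : ℕ) : ℂ :=
  μ ^ (lam + 2 * n) / (n.factorial * Gamma (lam + n + 1))

lemma besselCoeff_recurrence (lam : ℂ) {μ : ℂ} (hμ : μ ≠ 0) (n : ℕ) :
    μ ^ 2 * besselCoeff lam μ n = (n + 1) * (lam + n + 1) * besselCoeff lam μ (n + 1) := by
  have hpow : μ ^ (lam + 2 * (n + 1 : ℕ)) = μ ^ (lam + 2 * n) * μ ^ 2 := by
    rw [show lam + 2 * ((n + 1 : ℕ) : ℂ) = lam + 2 * n + 2 by push_cast; ring,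
      cpow_add _ _ hμ, cpow_two]
  have hGamma := one_div_Gamma_eq_self_mul_one_div_Gamma_add_one (lam + n + 1)
  rw [besselCoeff, besselCoeff, hpow, Nat.factorial_succ, Nat.cast_mul,
    show lam + ((n + 1 : ℕ) : ℂ) + 1 = lam + n + 1 + 1 by push_cast; ring, div_eq_mul_inv,
    div_eq_mul_inv, mul_inv, mul_inv, mul_inv, hGamma]
  push_cast
  field_simp

lemma eqOn_besselF_cpowSeries (lam μ : ℂ) :
    EqOn (besselF lam μ) (fun H : ℝ => cpowSeries (besselCoeff lam μ) (-(lam + 1)) H) (Ioi 0) := by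
  intro H hH
  have hH' : (H : ℂ) ≠ 0 := ofReal_ne_zero.2 (ne_of_gt hH)
  simp only [besselF, besselI, cpowSeries, ← tsum_mul_left]
  refine tsum_congr fun n => ?_
  rw [show 2 * μ / H / 2 = μ / H by field_simp, div_ofReal_cpow _ _ hH,
    show -(lam + 1) - 2 * n = -1 - (lam + 2 * n) by ring, cpow_sub _ _ hH', cpow_neg_one,
    besselCoeff]
  ring

theorem cpowSeries_ode_of_recurrence {D : ℕ → ℂ} {lam μ : ℂ}
    (hrec : ∀ n : ℕ, μ ^ 2 * D n = (n + 1) * (lam + n + 1) * D (n + 1)) {H : ℝ} (hH : 0 < H) :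
    let G := fun y : ℝ => cpowSeries D (-(lam + 1)) y
    (1 / 4) * (H : ℂ) ^ 2 * deriv (deriv G) H + (3 / 4) * (H : ℂ) * deriv G H
      - μ ^ 2 / (H : ℂ) ^ 2 * G H = (1 / 4) * (lam ^ 2 - 1) * G H := by
  intro G
  simp only [G]
  set e := -(lam + 1)
  have hD := HasInfiniteRadius.of_recurrence hrec
  have hD₁ := hD.linear_mul e 2
  have hG' := eqOn_deriv_ofReal_cpowSeries hD e
  rw [(hG'.deriv isOpen_Ioi) hH, eqOn_deriv_ofReal_cpowSeries hD₁ (e - 1) hH, hG' hH]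
  simp only [cpowSeries]
  set z : ℂ := (H : ℂ)
  have hz : z ≠ 0 := ofReal_ne_zero.2 (ne_of_gt hH)
  have hpow (a : ℂ) (k : ℕ) : z ^ (a - k) = z ^ a / z ^ k := by
    rw [cpow_sub _ _ hz, cpow_natCast]
  set g : ℕ → ℂ := fun n => n * (lam + n) * D n * z ^ (e - 2 * n)
  have hg : Summable g := by
    refine (summable_nat_add_iff 1).1 <|
      ((summable_cpowSeries hD (e - (2 : ℕ)) hz).mul_left (μ ^ 2)).congr fun n => ?_
    simp only [g]
    rw [show e - 2 * ((n + 1 : ℕ) : ℂ) = e - (2 : ℕ) - 2 * n by push_cast; ring]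
    push_cast
    linear_combination z ^ (e - 2 - 2 * n) * hrec n
  have hterm (n : ℕ) :
      1 / 4 * z ^ 2 * ((e - 1 - 2 * n) * ((e - 2 * n) * D n) * z ^ (e - 1 - 1 - 2 * n))
        + 3 / 4 * z * ((e - 2 * n) * D n * z ^ (e - 1 - 2 * n))
        - μ ^ 2 / z ^ 2 * (D n * z ^ (e - 2 * n))
      = 1 / 4 * (lam ^ 2 - 1) * (D n * z ^ (e - 2 * n)) + (g n - g (n + 1)) := by
    simp only [g]
    rw [show e - 1 - 1 - 2 * n = e - 2 * n - (2 : ℕ) by push_cast; ring,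
      show e - 1 - 2 * n = e - 2 * n - (1 : ℕ) by push_cast; ring,
      show e - 2 * ((n + 1 : ℕ) : ℂ) = e - 2 * n - (2 : ℕ) by push_cast; ring, hpow, hpow]
    push_cast
    field_simp
    linear_combination (-4 * z ^ (e - 2 * n)) * hrec n
  have hs₀ := summable_cpowSeries hD e hz
  have hs₁ := summable_cpowSeries hD₁ (e - 1) hz
  have hs₂ := summable_cpowSeries (hD₁.linear_mul (e - 1) 2) (e - 1 - 1) hz
  rw [← tsum_mul_left, ← tsum_mul_left, ← tsum_mul_left,
    ← (hs₂.mul_left _).tsum_add (hs₁.mul_left _),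
    ← ((hs₂.mul_left _).add (hs₁.mul_left _)).tsum_sub (hs₀.mul_left _), tsum_congr hterm,
    (hs₀.mul_left _).tsum_add (hg.sub ((summable_nat_add_iff 1).2 hg)), tsum_sub_succ hg,
    tsum_mul_left]
  simp [g]

/-- For `μ ≠ 0` the function `F(H) = H⁻¹ I_λ(2μH⁻¹)` satisfies
`¼H²F'' + ¾HF' − μ²H⁻²F = ¼(λ²−1)F` on `H > 0`; in particular for `λ = ±iν`
it is an eigenfunction with eigenvalue `−¼(ν²+1)` (the Laplace–Beltrami operator
on the Lobachevsky space in horospheric coordinates after Fourier transform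
along the horosphere). -/
theorem besselF_eigen (lam μ : ℂ) (hμ : μ ≠ 0) :
    (∀ H : ℝ, 0 < H →
      (1 / 4) * (H : ℂ) ^ 2 * deriv (deriv (besselF lam μ)) H
        + (3 / 4) * (H : ℂ) * deriv (besselF lam μ) H
        - μ ^ 2 / (H : ℂ) ^ 2 * besselF lam μ H
      = (1 / 4) * (lam ^ 2 - 1) * besselF lam μ H) ∧
    (∀ ν : ℝ, lam = Complex.I * ν ∨ lam = -(Complex.I * ν) →
      ∀ H : ℝ, 0 < H →
        (1 / 4) * (H : ℂ) ^ 2 * deriv (deriv (besselF lam μ)) H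
          + (3 / 4) * (H : ℂ) * deriv (besselF lam μ) H
          - μ ^ 2 / (H : ℂ) ^ 2 * besselF lam μ H
        = -(1 / 4) * ((ν : ℂ) ^ 2 + 1) * besselF lam μ H) := by
  have hF := eqOn_besselF_cpowSeries lam μ
  have hF' := hF.deriv isOpen_Ioi
  have hode (H : ℝ) (hH : 0 < H) :
      (1 / 4) * (H : ℂ) ^ 2 * deriv (deriv (besselF lam μ)) H
        + (3 / 4) * (H : ℂ) * deriv (besselF lam μ) H
        - μ ^ 2 / (H : ℂ) ^ 2 * besselF lam μ H
      = (1 / 4) * (lam ^ 2 - 1) * besselF lam μ H := by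
    rw [hF'.deriv isOpen_Ioi hH, hF' hH, hF hH]
    exact cpowSeries_ode_of_recurrence (besselCoeff_recurrence lam hμ) hH
  refine ⟨hode, fun ν hν H hH => ?_⟩
  have hlam : lam ^ 2 = -(ν : ℂ) ^ 2 := by
    rcases hν with rfl | rfl <;> ring_nf <;> simp [I_sq]
  rw [hode H hH, hlam]
  ring
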